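/- For each n ≥ 0 there exists a real parameter c with -2 < c < 0 such that for Q_c(x) = x² + c the orbit of 0 satisfies Q_c^{2n+3}(0) = 0 and c = Q_c(0) < 0 < Q_c^{2n+3-1}(0) < ⋯ < Q_c²(0); i.e., the critical orbit is periodic of period 2n+3 with the ordering c < 0 < Q_c^{N-1}(0) < … < Q_c²(0) where N = 2n+3. -/
import Mathlib

open Set Filter Topology

noncomputable def aux_orb (c : ℝ) (k : ℕ) : ℝ := (fun x : ℝ => x ^ 2 + c)^[k] 0

lemma aux_orb_succ (c : ℝ) (k : ℕ) : aux_orb c (k + 1) = (aux_orb c k) ^ 2 + c := by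
  simp [aux_orb, Function.iterate_succ_apply']

lemma aux_orb_cont (k : ℕ) : Continuous fun c => aux_orb c k := by
  induction k with
  | zero => simpa [aux_orb] using continuous_const
  | succ k ih =>
      have h : (fun c => aux_orb c (k + 1)) = fun c => (aux_orb c k) ^ 2 + c := by
        funext c; exact aux_orb_succ c k
      rw [h]; exact (ih.pow 2).add continuous_id

lemma aux_orb_neg_two : ∀ k, 2 ≤ k → aux_orb (-2) k = 2 := by
  intro k hk
  induction k with
  | zero => omega
  | succ k ih =>
      rcases Nat.lt_or_ge k 2 with h | h
      · interval_cases k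
        · omega
        · norm_num [aux_orb, Function.iterate_succ_apply']
      · rw [aux_orb_succ, ih h]; norm_num

/-- For each `n ≥ 0` there is a real `c ∈ (-2, 0)` with `Q_c^{2n+3}(0) = 0` and
critical orbit ordering `c < 0 < Q_c^{N-1}(0) < ⋯ < Q_c²(0)`, where `N = 2n+3`. -/
theorem stmt9 (n : ℕ) :
    ∃ c : ℝ, -2 < c ∧ c < 0 ∧
      (fun x : ℝ => x ^ 2 + c)^[2 * n + 3] 0 = 0 ∧
      0 < (fun x : ℝ => x ^ 2 + c)^[2 * n + 2] 0 ∧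
      ∀ k : ℕ, 2 ≤ k → k + 1 ≤ 2 * n + 2 →
        (fun x : ℝ => x ^ 2 + c)^[k + 1] 0 < (fun x : ℝ => x ^ 2 + c)^[k] 0 := by
  set N := 2 * n + 3 with hN
  -- Step A: find a ∈ (-2, -7/4) with all relevant iterates positive
  have hev : ∀ᶠ c in 𝓝 (-2 : ℝ), ∀ k ∈ Finset.Icc 2 N, 0 < aux_orb c k := by
    rw [eventually_all_finset]
    intro k hk
    have h2 : 2 ≤ k := (Finset.mem_Icc.mp hk).1
    have hca : ContinuousAt (fun c => aux_orb c k) (-2) := (aux_orb_cont k).continuousAt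
    have h0 : (0 : ℝ) < aux_orb (-2) k := by rw [aux_orb_neg_two k h2]; norm_num
    exact hca (Ioi_mem_nhds h0)
  have hlt : ∀ᶠ c in 𝓝 (-2 : ℝ), c < -7/4 := by
    have : Iio (-7/4 : ℝ) ∈ 𝓝 (-2 : ℝ) := Iio_mem_nhds (by norm_num)
    exact this
  obtain ⟨a, ha2, haN, ha74⟩ :
      ∃ a : ℝ, -2 < a ∧ (∀ k ∈ Finset.Icc 2 N, 0 < aux_orb a k) ∧ a < -7/4 := by
    have h1 := (hev.and hlt).filter_mono (nhdsWithin_le_nhds (s := Ioi (-2 : ℝ)))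
    have hmem : ∀ᶠ c in 𝓝[>] (-2 : ℝ), c ∈ Ioi (-2 : ℝ) := eventually_mem_nhdsWithin
    obtain ⟨a, ha, hb, hc⟩ := (hmem.and h1).exists
    exact ⟨a, ha, hb, hc⟩
  -- Step B: infimum of the "bad" set
  set B : Set ℝ := Icc a (-3/2) ∩ ⋃ k ∈ Finset.Icc 2 N, {c | aux_orb c k ≤ 0} with hB
  have hBclosed : IsClosed B := by
    refine isClosed_Icc.inter ?_
    refine Set.Finite.isClosed_biUnion (Finset.Icc 2 N).finite_toSet ?_
    exact fun k _ => isClosed_le (aux_orb_cont k) continuous_const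
  have h3N : (3 : ℕ) ∈ Finset.Icc 2 N := by simp [hN]
  have hBne : (-3/2 : ℝ) ∈ B := by
    constructor
    · exact ⟨by linarith, le_refl _⟩
    · refine mem_biUnion h3N ?_
      show aux_orb (-3/2) 3 ≤ 0
      norm_num [aux_orb, Function.iterate_succ_apply']
  have hBbdd : BddBelow B := ⟨a, fun c hc => hc.1.1⟩
  set cs := sInf B with hcs
  have hcsB : cs ∈ B := hBclosed.csInf_mem ⟨_, hBne⟩ hBbdd
  have hcsIcc : cs ∈ Icc a (-3/2 : ℝ) := hcsB.1
  have hpos : ∀ c, a ≤ c → c < cs → ∀ k, k ∈ Finset.Icc 2 N → 0 < aux_orb c k := by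
    intro c hac hccs k hk
    by_contra h
    push_neg at h
    have hcB : c ∈ B := ⟨⟨hac, le_trans hccs.le hcsIcc.2⟩, mem_biUnion hk h⟩
    exact absurd (csInf_le hBbdd hcB) (not_le.mpr hccs)
  have hacs : a < cs := by
    rcases lt_or_eq_of_le hcsIcc.1 with h | h
    · exact h
    · exfalso
      obtain ⟨k, hk, hle⟩ := mem_iUnion₂.mp hcsB.2
      rw [← h] at hle
      exact absurd hle (not_le.mpr (haN k hk))
  have hnonneg : ∀ k ∈ Finset.Icc 2 N, 0 ≤ aux_orb cs k := by
    intro k hk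
    have htend : Tendsto (fun c => aux_orb c k) (𝓝[<] cs) (𝓝 (aux_orb cs k)) :=
      ((aux_orb_cont k).tendsto cs).mono_left nhdsWithin_le_nhds
    have hev2 : ∀ᶠ c in 𝓝[<] cs, 0 ≤ aux_orb c k := by
      filter_upwards [Ioo_mem_nhdsLT_of_mem (show cs ∈ Ioc a cs from ⟨hacs, le_refl _⟩)]
        with c hc
      exact (hpos c hc.1.le hc.2 k hk).le
    exact ge_of_tendsto htend hev2
  obtain ⟨j, hj, hjle⟩ := mem_iUnion₂.mp hcsB.2
  have hjeq : aux_orb cs j = 0 := le_antisymm hjle (hnonneg j hj)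
  have hcsneg : cs < 0 := lt_of_le_of_lt hcsIcc.2 (by norm_num)
  have hj2 := Finset.mem_Icc.mp hj
  have hjN : j = N := by
    by_contra hne
    have h1 := hnonneg (j + 1) (Finset.mem_Icc.mpr ⟨by omega, by omega⟩)
    rw [aux_orb_succ, hjeq] at h1
    simp at h1
    linarith
  have hNzero : aux_orb cs N = 0 := hjN ▸ hjeq
  have hstrict : ∀ k, 2 ≤ k → k + 1 ≤ N → 0 < aux_orb cs k := by
    intro k hk2 hk1
    have h0 := hnonneg k (Finset.mem_Icc.mpr ⟨hk2, by omega⟩)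
    rcases h0.lt_or_eq with h | h
    · exact h
    · exfalso
      have h1 := hnonneg (k + 1) (Finset.mem_Icc.mpr ⟨by omega, by omega⟩)
      rw [aux_orb_succ, ← h] at h1
      simp at h1
      linarith
  set s := Real.sqrt (1 - 4 * cs) with hs
  have hs2 : s ^ 2 = 1 - 4 * cs := Real.sq_sqrt (by linarith)
  have hs1 : 1 < s := by nlinarith [Real.sqrt_nonneg (1 - 4 * cs)]
  set b := (1 + s) / 2 with hb
  have hbfix : b ^ 2 + cs = b := by rw [hb]; nlinarith
  have hbpos : 0 < b := by rw [hb]; linarith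
  have hlt_b : ∀ k, 2 ≤ k → k ≤ N → aux_orb cs k < b := by
    intro k hk2 hkN
    by_contra h
    push_neg at h
    have grow : ∀ d, k + d ≤ N → b ≤ aux_orb cs (k + d) := by
      intro d
      induction d with
      | zero => intro _; simpa using h
      | succ d ih =>
          intro hd
          have hprev := ih (by omega)
          rw [show k + (d + 1) = (k + d) + 1 by ring, aux_orb_succ]
          nlinarith
    have hg := grow (N - k) (by omega)
    rw [show k + (N - k) = N by omega, hNzero] at hg
    linarith
  refine ⟨cs, by linarith, hcsneg, hNzero, ?_, ?_⟩
  · exact hstrict (2 * n + 2) (by omega) (by omega)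
  · intro k hk2 hk1
    have ht0 : 0 < aux_orb cs k := hstrict k hk2 (by omega)
    have htb : aux_orb cs k < b := hlt_b k hk2 (by omega)
    show aux_orb cs (k + 1) < aux_orb cs k
    rw [aux_orb_succ]
    have h1b : 0 < aux_orb cs k - (1 - b) := by rw [hb]; linarith
    nlinarith [mul_pos (sub_pos.mpr htb) h1b]
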